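/- arXiv:1707.07319 — 4 statements merged into one kernel-verified Lean document; each statement's English description precedes it below -/
import Mathlib

section
/- Let g ≥ 1 and let M = [[A, B], [C, D]] be a 2g×2g integer matrix (with g×g blocks) satisfying Mᵀ J M = J, where J = [[0, -I_g], [I_g, 0]] (i.e., M is symplectic). Let q : ℤ^{2g} → ℤ/2ℤ be the hyperbolic quadratic form q(x) = Σ_{i=1}^g x_i · x_{g+i} reduced mod 2. Then q(M·v) = q(v) for all v ∈ ℤ^{2g} if and only if all diagonal entries of Cᵀ A and all diagonal entries of Dᵀ B are even. -/
open Matrix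

private lemma quadZero {n : ℕ} (S : Matrix (Fin n) (Fin n) (ZMod 2))
    (hsym : ∀ j k, S j k = S k j) (hdiag : ∀ i, S i i = 0) (w : Fin n → ZMod 2) :
    ∑ j : Fin n, ∑ k : Fin n, S j k * w j * w k = 0 := by
  rw [← Finset.sum_product']
  apply Finset.sum_ninvolution Prod.swap
  · intro p
    show S p.1 p.2 * w p.1 * w p.2 + S p.2 p.1 * w p.2 * w p.1 = 0
    rw [hsym p.2 p.1]
    have := CharTwo.add_self_eq_zero (S p.1 p.2 * w p.1 * w p.2)
    linear_combination this
  · intro p hp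
    intro hswap
    apply hp
    have h12 : p.2 = p.1 := congrArg Prod.fst hswap
    show S p.1 p.2 * w p.1 * w p.2 = 0
    rw [h12, hdiag, zero_mul, zero_mul]
  · intro a; exact Finset.mem_univ _
  · intro a; exact Prod.swap_swap a

private lemma quadForm {n : ℕ} (S : Matrix (Fin n) (Fin n) (ZMod 2)) (w w' : Fin n → ZMod 2) :
    w ⬝ᵥ S.mulVec w' = ∑ j : Fin n, ∑ k : Fin n, S j k * w j * w' k := by
  simp only [dotProduct, Matrix.mulVec, dotProduct, Finset.mul_sum]
  refine Finset.sum_congr rfl fun j _ => Finset.sum_congr rfl fun k _ => by ring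

private lemma keyLem {n : ℕ} (A B C D : Matrix (Fin n) (Fin n) (ZMod 2))
    (hs1 : Cᵀ * A = Aᵀ * C) (hs2 : Dᵀ * B = Bᵀ * D)
    (h3 : Aᵀ * D + Cᵀ * B = 1)
    (hd1 : ∀ i, (Aᵀ * C) i i = 0) (hd2 : ∀ i, (Bᵀ * D) i i = 0)
    (w1 w2 : Fin n → ZMod 2) :
    ∑ i : Fin n, (A.mulVec w1 + B.mulVec w2) i * (C.mulVec w1 + D.mulVec w2) i
      = ∑ i : Fin n, w1 i * w2 i := by
  have expand : ∑ i : Fin n, (A.mulVec w1 + B.mulVec w2) i * (C.mulVec w1 + D.mulVec w2) i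
      = (A.mulVec w1) ⬝ᵥ (C.mulVec w1) + (A.mulVec w1) ⬝ᵥ (D.mulVec w2)
        + (B.mulVec w2) ⬝ᵥ (C.mulVec w1) + (B.mulVec w2) ⬝ᵥ (D.mulVec w2) := by
    simp only [dotProduct, ← Finset.sum_add_distrib]
    refine Finset.sum_congr rfl fun i _ => by simp [Pi.add_apply]; ring
  have dv : ∀ (X Y : Matrix (Fin n) (Fin n) (ZMod 2)) (u v : Fin n → ZMod 2),
      (X.mulVec u) ⬝ᵥ (Y.mulVec v) = u ⬝ᵥ ((Xᵀ * Y).mulVec v) := by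
    intro X Y u v
    rw [← Matrix.mulVec_mulVec, Matrix.mulVec_transpose, dotProduct_comm (X *ᵥ u),
      Matrix.dotProduct_mulVec, dotProduct_comm]
  rw [expand, dv A C, dv A D, dv B C, dv B D]
  have hquad1 : w1 ⬝ᵥ ((Aᵀ * C).mulVec w1) = 0 := by
    rw [quadForm]
    exact quadZero _ (fun j k => by
      have := congrFun (congrFun hs1 k) j
      simpa [Matrix.mul_apply, Matrix.transpose_apply, mul_comm] using this) hd1 w1
  have hquad2 : w2 ⬝ᵥ ((Bᵀ * D).mulVec w2) = 0 := by
    rw [quadForm]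
    exact quadZero _ (fun j k => by
      have := congrFun (congrFun hs2 k) j
      simpa [Matrix.mul_apply, Matrix.transpose_apply, mul_comm] using this) hd2 w2
  have hcross : w2 ⬝ᵥ ((Bᵀ * C).mulVec w1) = w1 ⬝ᵥ ((Cᵀ * B).mulVec w2) := by
    rw [quadForm, quadForm, Finset.sum_comm]
    refine Finset.sum_congr rfl fun j _ => Finset.sum_congr rfl fun k _ => by
      simp [Matrix.mul_apply, Matrix.transpose_apply, Finset.sum_mul, Finset.mul_sum]
      refine Finset.sum_congr rfl fun i _ => by ring
  rw [hquad1, hquad2, hcross]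
  have : w1 ⬝ᵥ ((Aᵀ * D).mulVec w2) + w1 ⬝ᵥ ((Cᵀ * B).mulVec w2)
      = w1 ⬝ᵥ (((Aᵀ * D) + (Cᵀ * B)).mulVec w2) := by
    rw [Matrix.add_mulVec, dotProduct_add]
  rw [zero_add, add_zero, this, h3, Matrix.one_mulVec]
  rfl

/-- A symplectic `2g×2g` integer matrix `M = [[A,B],[C,D]]` preserves the
hyperbolic quadratic form `q(x) = ∑ xᵢ·x_{g+i}` modulo `2` if and only if all
diagonal entries of `CᵀA` and of `DᵀB` are even. -/
theorem statement_1 (g : ℕ) (hg : 1 ≤ g)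
    (A B C D : Matrix (Fin g) (Fin g) ℤ)
    (hsymp : (Matrix.fromBlocks A B C D)ᵀ * Matrix.fromBlocks 0 (-1) 1 0 *
        Matrix.fromBlocks A B C D = Matrix.fromBlocks 0 (-1) 1 0) :
    (∀ v : Fin g ⊕ Fin g → ℤ,
        ((∑ i : Fin g, (Matrix.fromBlocks A B C D).mulVec v (Sum.inl i) *
            (Matrix.fromBlocks A B C D).mulVec v (Sum.inr i) : ℤ) : ZMod 2) =
          ((∑ i : Fin g, v (Sum.inl i) * v (Sum.inr i) : ℤ) : ZMod 2)) ↔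
      ((∀ i : Fin g, 2 ∣ (Cᵀ * A) i i) ∧ (∀ i : Fin g, 2 ∣ (Dᵀ * B) i i)) := by
  rw [Matrix.fromBlocks_transpose, Matrix.fromBlocks_multiply, Matrix.fromBlocks_multiply,
    Matrix.fromBlocks_inj] at hsymp
  obtain ⟨h1, h2, h3, h4⟩ := hsymp
  simp only [mul_zero, mul_one, mul_neg, zero_add, add_zero, neg_mul,
    add_neg_eq_zero, ← sub_eq_add_neg, sub_eq_zero] at h1 h2 h4
  constructor
  · intro h
    constructor
    · intro i
      have hv := h (Sum.elim (fun j => if j = i then (1:ℤ) else 0) 0)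
      simp only [Matrix.mulVec, dotProduct, Fintype.sum_sum_type,
        Matrix.fromBlocks_apply₁₁, Matrix.fromBlocks_apply₁₂, Matrix.fromBlocks_apply₂₁,
        Matrix.fromBlocks_apply₂₂, Sum.elim_inl, Sum.elim_inr, Pi.zero_apply, mul_zero,
        mul_ite, mul_one, Finset.sum_ite_eq', Finset.mem_univ, if_true,
        Finset.sum_const_zero, add_zero, zero_mul] at hv
      have h0 : (((Cᵀ * A) i i : ℤ) : ZMod 2) = 0 := by
        push_cast [Matrix.mul_apply, Matrix.transpose_apply]
        simpa [mul_comm] using hv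
      exact_mod_cast (ZMod.intCast_zmod_eq_zero_iff_dvd ((Cᵀ * A) i i) 2).mp h0
    · intro i
      have hv := h (Sum.elim 0 (fun j => if j = i then (1:ℤ) else 0))
      simp only [Matrix.mulVec, dotProduct, Fintype.sum_sum_type,
        Matrix.fromBlocks_apply₁₁, Matrix.fromBlocks_apply₁₂, Matrix.fromBlocks_apply₂₁,
        Matrix.fromBlocks_apply₂₂, Sum.elim_inl, Sum.elim_inr, Pi.zero_apply, mul_zero,
        mul_ite, mul_one, Finset.sum_ite_eq', Finset.mem_univ, if_true,
        Finset.sum_const_zero, zero_add, add_zero, zero_mul] at hv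
      have h0 : (((Dᵀ * B) i i : ℤ) : ZMod 2) = 0 := by
        push_cast [Matrix.mul_apply, Matrix.transpose_apply]
        simpa [mul_comm] using hv
      exact_mod_cast (ZMod.intCast_zmod_eq_zero_iff_dvd ((Dᵀ * B) i i) 2).mp h0
  · rintro ⟨hd1, hd2⟩ v
    set f := Int.castRingHom (ZMod 2) with hf
    have mapT : ∀ X Y : Matrix (Fin g) (Fin g) ℤ,
        (X.map f)ᵀ * (Y.map f) = (Xᵀ * Y).map f := fun X Y => by
      rw [Matrix.map_mul, Matrix.transpose_map]
    set A' := A.map f with hA'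
    set B' := B.map f with hB'
    set C' := C.map f with hC'
    set D' := D.map f with hD'
    have e : Aᵀ * D = Cᵀ * B + 1 := by
      have h2' := sub_eq_iff_eq_add.mp h2
      rw [h2']; abel
    have hs1' : C'ᵀ * A' = A'ᵀ * C' := by rw [mapT, mapT, h1]
    have hs2' : D'ᵀ * B' = B'ᵀ * D' := by rw [mapT, mapT, h4]
    have h3' : A'ᵀ * D' + C'ᵀ * B' = 1 := by
      rw [mapT, mapT, e]
      ext i j
      simp only [Matrix.add_apply, Matrix.map_apply, Matrix.one_apply]
      rw [map_add]
      have hxx := CharTwo.add_self_eq_zero (f ((Cᵀ * B) i j))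
      have hone : f (if i = j then (1:ℤ) else 0) = if i = j then (1 : ZMod 2) else 0 := by
        split <;> simp
      rw [hone] at *
      linear_combination hxx
    have hd1' : ∀ i, (A'ᵀ * C') i i = 0 := by
      intro i
      rw [mapT, ← h1, Matrix.map_apply]
      exact (ZMod.intCast_zmod_eq_zero_iff_dvd _ 2).mpr (by exact_mod_cast hd1 i)
    have hd2' : ∀ i, (B'ᵀ * D') i i = 0 := by
      intro i
      rw [mapT, ← h4, Matrix.map_apply]
      exact (ZMod.intCast_zmod_eq_zero_iff_dvd _ 2).mpr (by exact_mod_cast hd2 i)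
    have key := keyLem A' B' C' D' hs1' hs2' h3' hd1' hd2'
      (fun j => ((v (Sum.inl j) : ℤ) : ZMod 2)) (fun j => ((v (Sum.inr j) : ℤ) : ZMod 2))
    simp only [Matrix.mulVec, dotProduct, Pi.add_apply, Matrix.map_apply,
      hA', hB', hC', hD'] at key
    push_cast [Matrix.mulVec, dotProduct, Fintype.sum_sum_type,
      Matrix.fromBlocks_apply₁₁, Matrix.fromBlocks_apply₁₂, Matrix.fromBlocks_apply₂₁,
      Matrix.fromBlocks_apply₂₂]
    simpa using key
end

section
/- Let G be a rationally perfect group and let H be a subgroup of G of finite index. Then H is rationally perfect. -/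
/-!
By Shapiro's lemma, `H¹(H; V) ≅ H¹(G; Coind_H^G V)`, and the coinduced representation is again
finite-dimensional because it embeds into the functions on the finitely many cosets of `H`.
-/

/-- A group `G` is *rationally perfect* if `H¹(G; V) = 0` for every
finite-dimensional rational representation `V` of `G`. -/
def RationallyPerfect (G : Type) [Group G] : Prop :=
  ∀ (V : Type) [AddCommGroup V] [Module ℚ V] [FiniteDimensional ℚ V]
    (ρ : Representation ℚ G V),
      Subsingleton (groupCohomology.H1 (Rep.of ρ))

namespace Representation

variable {k G A : Type*} [CommRing k] [Group G] [AddCommGroup A] [Module k A]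

lemma coindV_eq_zero_of_forall_out {S : Subgroup G} (ρ : Representation k S A)
    (f : coindV S.subtype ρ) (hf : ∀ q : Quotient (QuotientGroup.rightRel S), f.1 q.out = 0) :
    f = 0 := by
  ext g
  set r := (⟦g⟧ : Quotient (QuotientGroup.rightRel S)).out
  have hr : g * r⁻¹ ∈ S :=
    QuotientGroup.rightRel_apply.mp (Quotient.exact (Quotient.out_eq ⟦g⟧))
  calc f.1 g = f.1 (S.subtype ⟨g * r⁻¹, hr⟩ * r) := by simp
    _ = 0 := by rw [f.2, hf, map_zero]

instance finite_coindV [IsNoetherianRing k] [Module.Finite k A] (S : Subgroup G)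
    [S.FiniteIndex] (ρ : Representation k S A) : Module.Finite k (coindV S.subtype ρ) := by
  have : Finite (Quotient (QuotientGroup.rightRel S)) :=
    .of_equiv _ (QuotientGroup.quotientRightRelEquivQuotientLeftRel S).symm
  let restrictToReps : coindV S.subtype ρ →ₗ[k] Quotient (QuotientGroup.rightRel S) → A :=
    LinearMap.pi fun q => (LinearMap.proj q.out).comp (coindV S.subtype ρ).subtype
  refine .of_injective restrictToReps fun f₁ f₂ h => sub_eq_zero.1 ?_
  exact coindV_eq_zero_of_forall_out ρ _ fun q => by
    simpa [restrictToReps, sub_eq_zero] using congr_fun h q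

end Representation

/-- A finite-index subgroup of a rationally perfect group is rationally perfect. -/
theorem statement_6 (G : Type) [Group G] (H : Subgroup G) [H.FiniteIndex]
    (hG : RationallyPerfect G) : RationallyPerfect H := by
  intro V _ _ _ ρ
  have := hG _ (Representation.coind H.subtype ρ)
  exact (groupCohomology.coindIso (Rep.of ρ) 1).toLinearEquiv.symm.subsingleton
end

section
/- Let G be a group and let N be a normal subgroup of G such that the quotient G/N is finite. If N is rationally perfect, then G is rationally perfect. -/
/-!
By the inflation–restriction exact sequence `H¹(G/N, V^N) → H¹(G, V) → H¹(N, V)` it suffices that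
both outer groups vanish. The right one does by hypothesis. The left one does because the order
of the finite group `Q = G/N` is invertible in `ℚ`: summing the cocycle identity
`f (g * h) = g • f h + f g` over `h` gives `S = g • S + |Q| • f g` with `S = ∑ h, f h`, so `f` is
the coboundary of `-S / |Q|`.
-/

open CategoryTheory Limits

namespace groupCohomology

variable {k G : Type} [CommRing k] [Group G]

theorem mem_coboundaries₁_iff {A : Rep k G} (f : G → A) :
    f ∈ coboundaries₁ A ↔ ∃ v : A, ∀ g, A.ρ g v - v = f g :=
  ⟨fun ⟨v, hv⟩ => ⟨v, congrFun hv⟩, fun ⟨v, hv⟩ => ⟨v, funext hv⟩⟩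

theorem subsingleton_H1_iff {A : Rep k G} :
    Subsingleton (H1 A) ↔ ∀ f ∈ cocycles₁ A, f ∈ coboundaries₁ A := by
  constructor
  · intro _ f hf
    exact (H1π_eq_zero_iff ⟨f, hf⟩).1 (Subsingleton.elim _ _)
  · intro h
    refine subsingleton_of_forall_eq 0 fun x => ?_
    induction x using H1_induction_on with
    | h f => exact (H1π_eq_zero_iff f).2 (h f f.2)

theorem subsingleton_H1_of_finite [Finite G] [Invertible (Nat.card G : k)] (A : Rep k G) :
    Subsingleton (H1 A) := by
  have := Fintype.ofFinite G
  refine subsingleton_H1_iff.2 fun f hf => (mem_coboundaries₁_iff f).2 ?_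
  rw [mem_cocycles₁_iff] at hf
  refine ⟨-⅟(Nat.card G : k) • ∑ h, f h, fun g => ?_⟩
  have hsum : ∑ h, f h = A.ρ g (∑ h, f h) + (Nat.card G : k) • f g :=
    calc ∑ h, f h = ∑ h, f (g * h) := (Fintype.sum_equiv (Equiv.mulLeft g) _ _ fun _ => rfl).symm
      _ = ∑ h, (A.ρ g (f h) + f g) := Finset.sum_congr rfl fun h _ => hf g h
      _ = A.ρ g (∑ h, f h) + (Nat.card G : k) • f g := by
        rw [Finset.sum_add_distrib, map_sum, Finset.sum_const, Finset.card_univ,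
          Nat.card_eq_fintype_card, Nat.cast_smul_eq_nsmul]
  have hdiff : ∑ h, f h - A.ρ g (∑ h, f h) = (Nat.card G : k) • f g :=
    sub_eq_iff_eq_add'.2 hsum
  rw [map_smul, neg_smul, neg_smul, neg_sub_neg, ← smul_sub, hdiff, smul_smul, invOf_mul_self,
    one_smul]

theorem subsingleton_H1_of_finite_quotient (A : Rep k G) (S : Subgroup G) [S.Normal]
    [Finite (G ⧸ S)] [Invertible (Nat.card (G ⧸ S) : k)]
    (hS : Subsingleton (H1 (Rep.res S.subtype A))) : Subsingleton (H1 A) := by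
  have h₁ : IsZero (H1InfRes A S).X₁ :=
    ModuleCat.isZero_iff_subsingleton.2 (subsingleton_H1_of_finite _)
  have h₃ : IsZero (H1InfRes A S).X₃ := ModuleCat.isZero_iff_subsingleton.2 hS
  exact ModuleCat.isZero_iff_subsingleton.1 <|
    (H1InfRes_exact A S).isZero_X₂ (h₁.eq_of_src _ _) (h₃.eq_of_tgt _ _)

end groupCohomology

/-- If `N` is a normal subgroup of `G` with finite quotient `G/N` and `N` is
rationally perfect, then `G` is rationally perfect. -/
theorem statement_7 (G : Type) [Group G] (N : Subgroup G) [N.Normal]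
    [Finite (G ⧸ N)] (hN : RationallyPerfect N) : RationallyPerfect G := by
  intro V _ _ _ ρ
  have : Invertible (Nat.card (G ⧸ N) : ℚ) :=
    invertibleOfNonzero (Nat.cast_ne_zero.2 Nat.card_pos.ne')
  exact groupCohomology.subsingleton_H1_of_finite_quotient _ N (hN V (ρ.comp N.subtype))
end

section
/- There is a surjective group homomorphism from SL₂(ℤ) onto the free product (ℤ/2ℤ) * (ℤ/3ℤ) whose kernel is the central subgroup {I, −I} of order 2. Equivalently, the quotient SL₂(ℤ)/{±I} is isomorphic to the free product of a cyclic group of order 2 and a cyclic group of order 3. -/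
/-!
In `PSL(2, ℤ)` the images of `S` and `T * S` satisfy `S ^ 2 = 1` and `(T * S) ^ 3 = 1`, so they
define a homomorphism `ℤ/2 ∗ ℤ/3 → PSL(2, ℤ)`; it is onto because `S` and `T` generate `SL(2, ℤ)`.
It is injective by the ping-pong lemma for the Möbius action on the upper half-plane: `S` maps
`{Re z > 0}` into `{Re z < 0}`, while `T * S` and `(T * S) ^ 2` map `{Re z < 0}` into `{Re z > 0}`.
Composing the projection `SL(2, ℤ) → PSL(2, ℤ)` with the inverse isomorphism gives the required
map, whose kernel is the centre `{±1}` of `SL(2, ℤ)`.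
-/

open MatrixGroups ModularGroup UpperHalfPlane Cardinal Pointwise Monoid
open scoped Monoid.Coprod

universe u

section ZModPow

variable {G : Type*} [Group G] {n : ℕ} [NeZero n]

def ZMod.powHom (g : G) (hg : g ^ n = 1) : Multiplicative (ZMod n) →* G where
  toFun a := g ^ a.toAdd.val
  map_one' := by simp
  map_mul' a b := by
    simp only [toAdd_mul, ZMod.val_add, ← pow_eq_pow_mod _ hg, pow_add]

lemma ZMod.powHom_apply (g : G) (hg : g ^ n = 1) (a : Multiplicative (ZMod n)) :
    ZMod.powHom g hg a = g ^ a.toAdd.val := rfl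

lemma ZMod.powHom_ofAdd_one (hn : n ≠ 1) (g : G) (hg : g ^ n = 1) :
    ZMod.powHom g hg (Multiplicative.ofAdd 1) = g := by
  simp [ZMod.powHom_apply, ZMod.val_one'' hn]

lemma ZMod.powHom_apply_eq_pow_of_ne_one (g : G) (hg : g ^ n = 1) {a : Multiplicative (ZMod n)}
    (ha : a ≠ 1) : ∃ k, 0 < k ∧ k < n ∧ ZMod.powHom g hg a = g ^ k :=
  ⟨a.toAdd.val, by simpa [Nat.pos_iff_ne_zero] using ha, ZMod.val_lt _, rfl⟩

end ZModPow

namespace Monoid.Coprod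

theorem lift_injective_of_ping_pong {G : Type*} {H₁ H₂ : Type u} {α : Type*} [Group G]
    [Group H₁] [Group H₂] [MulAction G α] (f₁ : H₁ →* G) (f₂ : H₂ →* G)
    (hcard : 3 ≤ #H₁ ∨ 3 ≤ #H₂) {X₁ X₂ : Set α} (hX₁ : X₁.Nonempty) (hX₂ : X₂.Nonempty)
    (hdisj : Disjoint X₁ X₂) (hpp₁ : ∀ h ≠ 1, f₁ h • X₂ ⊆ X₁) (hpp₂ : ∀ h ≠ 1, f₂ h • X₁ ⊆ X₂) :
    Function.Injective (lift f₁ f₂) := by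
  let H : Bool → Type u := fun b => cond b H₁ H₂
  let _ : ∀ b, Group (H b) := fun b => b.rec ‹Group H₂› ‹Group H₁›
  let f : ∀ b, H b →* G := fun b => b.rec f₂ f₁
  let toCoprodI : H₁ ∗ H₂ →* CoprodI H :=
    lift (CoprodI.of (M := H) (i := true)) (CoprodI.of (M := H) (i := false))
  let ofCoprodI : CoprodI H →* H₁ ∗ H₂ := CoprodI.lift fun b => b.rec inr inl
  have h_left : ofCoprodI.comp toCoprodI = .id _ := by
    apply hom_ext <;> ext <;> simp [toCoprodI, ofCoprodI]
  have h_lift : lift f₁ f₂ = (CoprodI.lift f).comp toCoprodI := by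
    apply hom_ext <;> ext <;> simp [toCoprodI, f]
  rw [h_lift, MonoidHom.coe_comp]
  refine Function.Injective.comp ?_ (Function.LeftInverse.injective (g := ofCoprodI)
    (DFunLike.congr_fun h_left))
  refine CoprodI.lift_injective_of_ping_pong f ?_ (fun b => b.rec X₂ X₁) ?_ ?_ ?_
  · exact .inr (hcard.elim (⟨true, ·⟩) (⟨false, ·⟩))
  · rintro (_ | _)
    exacts [hX₂, hX₁]
  · rintro (_ | _) (_ | _) hne
    exacts [absurd rfl hne, hdisj.symm, hdisj, absurd rfl hne]
  · rintro (_ | _) (_ | _) hne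
    exacts [absurd rfl hne, hpp₂, hpp₁, absurd rfl hne]

end Monoid.Coprod

namespace UpperHalfPlane

lemma re_modular_S_smul (z : ℍ) : (S • z).re = -z.re / Complex.normSq z := by
  rw [← coe_re, modular_S_smul, coe_mk, Complex.inv_re, Complex.neg_re, Complex.normSq_neg]
  rfl

lemma re_modular_T_mul_S_smul (z : ℍ) : ((T * S) • z).re = 1 - z.re / Complex.normSq z := by
  rw [mul_smul, ModularGroup.re_T_smul, re_modular_S_smul]
  ring

lemma one_lt_re_modular_T_mul_S_smul {z : ℍ} (hz : z.re < 0) : 1 < ((T * S) • z).re := by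
  have : z.re / Complex.normSq z < 0 := div_neg_of_neg_of_pos hz (Complex.normSq_pos.2 z.ne_zero)
  linarith [re_modular_T_mul_S_smul z]

lemma re_modular_T_mul_S_smul_pos {z : ℍ} (hz : 1 < z.re) : 0 < ((T * S) • z).re := by
  have hnormSq : z.re < Complex.normSq z := by
    rw [Complex.normSq_apply, coe_re, coe_im]
    nlinarith [z.im_pos]
  have : z.re / Complex.normSq z < 1 := (div_lt_one (by linarith)).2 hnormSq
  linarith [re_modular_T_mul_S_smul z]

end UpperHalfPlane

namespace ModularGroup

lemma mem_center_iff {g : SL(2, ℤ)} : g ∈ Subgroup.center SL(2, ℤ) ↔ g = 1 ∨ g = -1 := by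
  rw [Matrix.SpecialLinearGroup.mem_center_iff, Fintype.card_fin]
  constructor
  · rintro ⟨r, hr, hg⟩
    rcases sq_eq_one_iff.1 hr with rfl | rfl
    exacts [.inl (Subtype.ext (by simp [← hg])), .inr (Subtype.ext (by simp [← hg]))]
  · rintro (rfl | rfl)
    exacts [⟨1, by simp, by simp⟩, ⟨-1, by simp, by simp⟩]

lemma S_mul_S : (S * S : SL(2, ℤ)) = -1 := by
  ext i j; fin_cases i <;> fin_cases j <;> rfl

lemma T_mul_S_pow_three : (T * S : SL(2, ℤ)) ^ 3 = -1 := by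
  ext i j; fin_cases i <;> fin_cases j <;> rfl

lemma mk_S_pow_two : ((S : PSL(2, ℤ))) ^ 2 = 1 := by
  rw [← QuotientGroup.mk_pow, QuotientGroup.eq_one_iff, sq, S_mul_S, mem_center_iff]
  exact .inr rfl

lemma mk_T_mul_S_pow_three : ((T * S : SL(2, ℤ)) : PSL(2, ℤ)) ^ 3 = 1 := by
  rw [← QuotientGroup.mk_pow, QuotientGroup.eq_one_iff, T_mul_S_pow_three, mem_center_iff]
  exact .inr rfl

noncomputable def pslToPerm : PSL(2, ℤ) →* Equiv.Perm ℍ :=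
  QuotientGroup.lift _ (MulAction.toPermHom SL(2, ℤ) ℍ) fun g hg => by
    rcases mem_center_iff.1 hg with rfl | rfl
    exacts [map_one _, Equiv.ext fun z => by simp]

noncomputable def coprodToPSL : Multiplicative (ZMod 2) ∗ Multiplicative (ZMod 3) →* PSL(2, ℤ) :=
  Coprod.lift (ZMod.powHom _ mk_S_pow_two) (ZMod.powHom _ mk_T_mul_S_pow_three)

lemma coprodToPSL_surjective : Function.Surjective coprodToPSL := by
  have hS : (S : PSL(2, ℤ)) ∈ coprodToPSL.range :=
    ⟨Coprod.inl (.ofAdd 1), by simp [coprodToPSL, ZMod.powHom_ofAdd_one]⟩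
  have hTS : ((T * S : SL(2, ℤ)) : PSL(2, ℤ)) ∈ coprodToPSL.range :=
    ⟨Coprod.inr (.ofAdd 1), by simp [coprodToPSL, ZMod.powHom_ofAdd_one]⟩
  have hT : (T : PSL(2, ℤ)) ∈ coprodToPSL.range := by
    simpa using mul_mem hTS (inv_mem hS)
  rw [← MonoidHom.range_eq_top, eq_top_iff,
    ← (QuotientGroup.mk' _).range_eq_top_of_surjective (QuotientGroup.mk'_surjective _),
    MonoidHom.range_eq_map, ← _root_.SpecialLinearGroup.SL2Z_generators, MonoidHom.map_closure,
    Subgroup.closure_le]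
  rintro _ ⟨g, rfl | rfl, rfl⟩
  exacts [hS, hT]

lemma coprodToPSL_injective : Function.Injective coprodToPSL := by
  refine Function.Injective.of_comp (f := pslToPerm) ?_
  rw [← MonoidHom.coe_comp, coprodToPSL, Coprod.comp_lift]
  refine Coprod.lift_injective_of_ping_pong _ _ (.inr ?_) (X₁ := {z : ℍ | z.re < 0})
    (X₂ := {z | 0 < z.re}) ?_ ?_ ?_ ?_ ?_
  · rw [Cardinal.mk_fintype, Fintype.card_multiplicative, ZMod.card]
    norm_num
  · exact ⟨(-1 : ℝ) +ᵥ I, by simp⟩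
  · exact ⟨(1 : ℝ) +ᵥ I, by simp⟩
  · exact Set.disjoint_left.2 fun z h₁ h₂ => lt_asymm (α := ℝ) h₁ h₂
  · intro h hh
    obtain ⟨k, hk₀, hk₂, hk⟩ := ZMod.powHom_apply_eq_pow_of_ne_one _ mk_S_pow_two hh
    obtain rfl : k = 1 := by omega
    rintro _ ⟨z, hz, rfl⟩
    rw [MonoidHom.comp_apply, hk, pow_one]
    show (S • z).re < 0
    rw [re_modular_S_smul]
    exact div_neg_of_neg_of_pos (neg_neg_of_pos hz) (Complex.normSq_pos.2 z.ne_zero)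
  · intro h hh
    obtain ⟨k, hk₀, hk₃, hk⟩ := ZMod.powHom_apply_eq_pow_of_ne_one _ mk_T_mul_S_pow_three hh
    rintro _ ⟨z, hz, rfl⟩
    rw [MonoidHom.comp_apply, hk, ← QuotientGroup.mk_pow]
    show 0 < ((T * S) ^ k • z).re
    obtain rfl | rfl : k = 1 ∨ k = 2 := by omega
    · exact one_pos.trans (pow_one (T * S) ▸ one_lt_re_modular_T_mul_S_smul hz)
    · rw [sq, mul_smul]
      exact re_modular_T_mul_S_smul_pos (one_lt_re_modular_T_mul_S_smul hz)

noncomputable def coprodEquivPSL :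
    Multiplicative (ZMod 2) ∗ Multiplicative (ZMod 3) ≃* PSL(2, ℤ) :=
  .ofBijective coprodToPSL ⟨coprodToPSL_injective, coprodToPSL_surjective⟩

end ModularGroup

/-- There is a surjective homomorphism `SL₂(ℤ) → (ℤ/2) * (ℤ/3)` (free product)
whose kernel is the central subgroup `{I, -I}`. -/
theorem statement_10 :
    ∃ φ : Matrix.SpecialLinearGroup (Fin 2) ℤ →*
        Monoid.Coprod (Multiplicative (ZMod 2)) (Multiplicative (ZMod 3)),
      Function.Surjective φ ∧
        ∀ M : Matrix.SpecialLinearGroup (Fin 2) ℤ,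
          M ∈ φ.ker ↔ ((M : Matrix (Fin 2) (Fin 2) ℤ) = 1 ∨
            (M : Matrix (Fin 2) (Fin 2) ℤ) = -1) := by
  refine ⟨(coprodEquivPSL.symm : PSL(2, ℤ) →* _).comp (QuotientGroup.mk' _),
    coprodEquivPSL.symm.surjective.comp (QuotientGroup.mk'_surjective _), fun M => ?_⟩
  rw [MonoidHom.ker_mulEquiv_comp, QuotientGroup.ker_mk']
  exact mem_center_iff.trans (or_congr Subtype.ext_iff Subtype.ext_iff)
end
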